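/- In the CIR multiple-jump tree, if y^n_k ≤ θ_* h with θ_* = (κθ/σ)², then the up move satisfies 0 ≤ y^{n+1}_{k_u(n,k)} − y^n_k ≤ C_* h, where one can take C_* = κθ + 2σ√(θ_* + κθ) + σ², for all h small enough. -/

import Mathlib

/-!
The up node `kUp` is the first node of level `n + 1` above `k` reaching the drift target
`D = y + κ (θ - y) h`. For `y ≤ θ_* h` and small `h`, `D` lies in `[y, (θ_* + κθ) h]` and below
`Y₀ ≤ y^{n+1}_{n+1}`, so `kUp` exists and the move is nonnegative. The square roots of the
lattice values are affine in `(n, k)` truncated at `0`, so a single jump adds at most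
`σ √y √h + σ² h / 4 ≤ (κθ + σ² / 4) h`; this is where `θ_* = (κθ/σ)²` comes from. After several
jumps the node just below `kUp` is still under `D ≤ (θ_* + κθ) h`, so the last lattice step adds at
most `(2σ √(θ_* + κθ) + σ²) h` on top of `D - y ≤ κθ h`.
-/

open Real

/-- The node values of the CIR binomial lattice. -/
noncomputable def latticeY (Y₀ σ h : ℝ) (n k : ℕ) : ℝ :=
  if 0 < Real.sqrt Y₀ + σ / 2 * (2 * (k : ℝ) - (n : ℝ)) * Real.sqrt h then
    (Real.sqrt Y₀ + σ / 2 * (2 * (k : ℝ) - (n : ℝ)) * Real.sqrt h) ^ 2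
  else 0

open scoped Classical in
/-- The "up jump" index k_u(n,k) of the CIR multiple-jump tree. -/
noncomputable def kUp (Y₀ σ h κ θ : ℝ) (n k : ℕ) : ℕ :=
  let S := (Finset.Icc (k + 1) (n + 1)).filter fun j =>
    latticeY Y₀ σ h n k + κ * (θ - latticeY Y₀ σ h n k) * h ≤ latticeY Y₀ σ h (n + 1) j
  if hS : S.Nonempty then S.min' hS else n + 1

theorem max_add_zero_le {α : Type*} [AddCommGroup α] [LinearOrder α] [IsOrderedAddMonoid α]
    {x c : α} (hc : 0 ≤ c) : max (x + c) 0 ≤ max x 0 + c := by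
  rw [← max_add_add_right, zero_add]
  exact max_le_max le_rfl hc

theorem sqrt_le_sqrt_mul_sqrt_of_le_mul {y b h : ℝ} (hy : y ≤ b * h) (hb : 0 ≤ b) :
    √y ≤ √b * √h := by
  rw [← sqrt_mul hb]; exact sqrt_le_sqrt hy

noncomputable def latticeX (Y₀ σ h : ℝ) (n k : ℕ) : ℝ :=
  √Y₀ + σ / 2 * (2 * (k : ℝ) - (n : ℝ)) * √h

section Lattice

variable (Y₀ σ h : ℝ)

theorem latticeY_eq_sq_max (n k : ℕ) :
    latticeY Y₀ σ h n k = max (latticeX Y₀ σ h n k) 0 ^ 2 := by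
  unfold latticeY latticeX
  split_ifs with hx
  · rw [max_eq_left hx.le]
  · rw [max_eq_right (not_lt.mp hx)]; ring

theorem latticeY_nonneg (n k : ℕ) : 0 ≤ latticeY Y₀ σ h n k := by
  rw [latticeY_eq_sq_max]; positivity

theorem sqrt_latticeY (n k : ℕ) : √(latticeY Y₀ σ h n k) = max (latticeX Y₀ σ h n k) 0 := by
  rw [latticeY_eq_sq_max, sqrt_sq (le_max_right _ _)]

theorem latticeX_succ_right (m j : ℕ) :
    latticeX Y₀ σ h m (j + 1) = latticeX Y₀ σ h m j + σ * √h := by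
  unfold latticeX; push_cast; ring

theorem latticeX_succ_succ (n k : ℕ) :
    latticeX Y₀ σ h (n + 1) (k + 1) = latticeX Y₀ σ h n k + σ / 2 * √h := by
  unfold latticeX; push_cast; ring

theorem latticeY_le_of_latticeX_eq_add {n k n' k' : ℕ} {c : ℝ} (hc : 0 ≤ c)
    (hx : latticeX Y₀ σ h n' k' = latticeX Y₀ σ h n k + c) :
    latticeY Y₀ σ h n' k' ≤ latticeY Y₀ σ h n k + 2 * c * √(latticeY Y₀ σ h n k) + c ^ 2 := by
  rw [sqrt_latticeY, latticeY_eq_sq_max, latticeY_eq_sq_max, hx]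
  calc max (latticeX Y₀ σ h n k + c) 0 ^ 2 ≤ (max (latticeX Y₀ σ h n k) 0 + c) ^ 2 :=
        pow_le_pow_left₀ (le_max_right _ _) (max_add_zero_le hc) 2
    _ = _ := by ring

variable {σ h}

theorem latticeY_succ_right_le (hσ : 0 ≤ σ) (hh : 0 ≤ h) (m j : ℕ) :
    latticeY Y₀ σ h m (j + 1) ≤
      latticeY Y₀ σ h m j + 2 * σ * √(latticeY Y₀ σ h m j) * √h + σ ^ 2 * h := by
  have := latticeY_le_of_latticeX_eq_add Y₀ σ h (by positivity) (latticeX_succ_right Y₀ σ h m j)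
  rw [mul_pow, sq_sqrt hh] at this
  linarith

theorem latticeY_succ_succ_le (hσ : 0 ≤ σ) (hh : 0 ≤ h) (n k : ℕ) :
    latticeY Y₀ σ h (n + 1) (k + 1) ≤
      latticeY Y₀ σ h n k + σ * √(latticeY Y₀ σ h n k) * √h + σ ^ 2 / 4 * h := by
  have := latticeY_le_of_latticeX_eq_add Y₀ σ h (by positivity) (latticeX_succ_succ Y₀ σ h n k)
  rw [mul_pow, sq_sqrt hh] at this
  linarith

theorem le_latticeY_self (hσ : 0 ≤ σ) (m : ℕ) : Y₀ ≤ latticeY Y₀ σ h m m := by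
  have hx : √Y₀ ≤ latticeX Y₀ σ h m m := by
    have : latticeX Y₀ σ h m m = √Y₀ + σ / 2 * m * √h := by unfold latticeX; ring
    linarith [show 0 ≤ σ / 2 * m * √h by positivity]
  rw [← sqrt_le_sqrt_iff (latticeY_nonneg Y₀ σ h m m), sqrt_latticeY]
  exact hx.trans (le_max_left _ _)

theorem latticeY_succ_succ_sub_le {a : ℝ} (ha : 0 ≤ a) (hσ : 0 ≤ σ) (hh : 0 ≤ h) {n k : ℕ}
    (hy : latticeY Y₀ σ h n k ≤ a ^ 2 * h) :
    latticeY Y₀ σ h (n + 1) (k + 1) - latticeY Y₀ σ h n k ≤ (σ * a + σ ^ 2 / 4) * h := by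
  have hroot : √(latticeY Y₀ σ h n k) ≤ a * √h := by
    simpa [sqrt_sq ha] using sqrt_le_sqrt_mul_sqrt_of_le_mul hy (sq_nonneg a)
  have hstep := latticeY_succ_succ_le Y₀ hσ hh n k
  have hcross : σ * √(latticeY Y₀ σ h n k) * √h ≤ σ * a * h := by
    calc σ * √(latticeY Y₀ σ h n k) * √h ≤ σ * (a * √h) * √h := by gcongr
      _ = σ * a * h := by linear_combination σ * a * mul_self_sqrt hh
  linarith

theorem latticeY_succ_right_sub_le {b : ℝ} (hb : 0 ≤ b) (hσ : 0 ≤ σ) (hh : 0 ≤ h) {m j : ℕ}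
    (hy : latticeY Y₀ σ h m j ≤ b * h) :
    latticeY Y₀ σ h m (j + 1) - latticeY Y₀ σ h m j ≤ (2 * σ * √b + σ ^ 2) * h := by
  have hroot := sqrt_le_sqrt_mul_sqrt_of_le_mul hy hb
  have hstep := latticeY_succ_right_le Y₀ hσ hh m j
  have hcross : 2 * σ * √(latticeY Y₀ σ h m j) * √h ≤ 2 * σ * √b * h := by
    calc 2 * σ * √(latticeY Y₀ σ h m j) * √h ≤ 2 * σ * (√b * √h) * √h := by gcongr
      _ = 2 * σ * √b * h := by linear_combination 2 * σ * √b * mul_self_sqrt hh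
  linarith

end Lattice

theorem kUp_spec {Y₀ σ h κ θ : ℝ} {n k : ℕ} (hkn : k ≤ n)
    (htop : latticeY Y₀ σ h n k + κ * (θ - latticeY Y₀ σ h n k) * h ≤
      latticeY Y₀ σ h (n + 1) (n + 1)) :
    k + 1 ≤ kUp Y₀ σ h κ θ n k ∧
      latticeY Y₀ σ h n k + κ * (θ - latticeY Y₀ σ h n k) * h ≤
        latticeY Y₀ σ h (n + 1) (kUp Y₀ σ h κ θ n k) ∧
      (k + 1 < kUp Y₀ σ h κ θ n k →
        latticeY Y₀ σ h (n + 1) (kUp Y₀ σ h κ θ n k - 1) <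
          latticeY Y₀ σ h n k + κ * (θ - latticeY Y₀ σ h n k) * h) := by
  classical
  set S := (Finset.Icc (k + 1) (n + 1)).filter fun j =>
    latticeY Y₀ σ h n k + κ * (θ - latticeY Y₀ σ h n k) * h ≤ latticeY Y₀ σ h (n + 1) j
  have hS : S.Nonempty := ⟨n + 1, by simp [S, htop, hkn]⟩
  have hku : kUp Y₀ σ h κ θ n k = S.min' hS := by
    unfold kUp; convert dif_pos hS
  obtain ⟨hIcc, hreach⟩ := Finset.mem_filter.mp (Finset.min'_mem S hS)
  obtain ⟨hlo, hhi⟩ := Finset.mem_Icc.mp hIcc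
  rw [hku]
  refine ⟨hlo, hreach, fun hgt => ?_⟩
  by_contra! hpred
  have hmem : S.min' hS - 1 ∈ S :=
    Finset.mem_filter.mpr ⟨Finset.mem_Icc.mpr ⟨by omega, by omega⟩, hpred⟩
  have : S.min' hS ≤ S.min' hS - 1 := Finset.min'_le S _ hmem
  omega

/-- Below the threshold θ_* h (θ_* = (κθ/σ)²), the up move of the CIR tree is of
size at most C_* h with C_* = κθ + 2σ√(θ_* + κθ) + σ², for all small h. -/
theorem up_move_small_node_bound
    (Y₀ σ κ θ : ℝ) (hY₀ : 0 < Y₀) (hσ : 0 < σ) (hκ : 0 < κ) (hθ : 0 < θ) :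
    ∃ h₀ > 0, ∀ h : ℝ, 0 < h → h < h₀ →
      ∀ n k : ℕ, k ≤ n →
        latticeY Y₀ σ h n k ≤ (κ * θ / σ) ^ 2 * h →
        0 ≤ latticeY Y₀ σ h (n + 1) (kUp Y₀ σ h κ θ n k) - latticeY Y₀ σ h n k ∧
        latticeY Y₀ σ h (n + 1) (kUp Y₀ σ h κ θ n k) - latticeY Y₀ σ h n k ≤
          (κ * θ + 2 * σ * Real.sqrt ((κ * θ / σ) ^ 2 + κ * θ) + σ ^ 2) * h := by
  set θs := (κ * θ / σ) ^ 2
  have hθs : 0 < θs := by positivity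
  refine ⟨min (Y₀ / (θs + κ * θ)) (θ / θs), by positivity, fun h hh hh₀ n k hkn hy => ?_⟩
  have hhY₀ : (θs + κ * θ) * h < Y₀ := by
    rw [mul_comm]; exact (lt_div_iff₀ (by positivity)).mp (hh₀.trans_le (min_le_left _ _))
  have hhθ : θs * h < θ := by
    rw [mul_comm]; exact (lt_div_iff₀ hθs).mp (hh₀.trans_le (min_le_right _ _))
  set y := latticeY Y₀ σ h n k
  have hy₀ : 0 ≤ y := latticeY_nonneg Y₀ σ h n k
  have hdrift₀ : 0 ≤ κ * (θ - y) * h := by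
    have : 0 ≤ θ - y := by linarith
    positivity
  have hdrift : κ * (θ - y) * h ≤ κ * θ * h := by
    linarith [mul_nonneg (mul_nonneg hκ.le hy₀) hh.le]
  obtain ⟨hku, hreach, hpred⟩ :=
    kUp_spec (κ := κ) (θ := θ) hkn (by linarith [le_latticeY_self Y₀ (h := h) hσ.le (n + 1)])
  refine ⟨by linarith, ?_⟩
  rcases hku.eq_or_lt with hsingle | hmulti
  · rw [← hsingle]
    have hjump := latticeY_succ_succ_sub_le Y₀ (by positivity) hσ.le hh.le hy
    rw [mul_div_cancel₀ _ hσ.ne'] at hjump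
    linarith [show 0 ≤ 2 * σ * √(θs + κ * θ) * h by positivity, show 0 ≤ σ ^ 2 * h by positivity]
  · have hprev := hpred hmulti
    have hjump := latticeY_succ_right_sub_le Y₀ (by positivity) hσ.le hh.le
      (j := kUp Y₀ σ h κ θ n k - 1) (show _ ≤ (θs + κ * θ) * h by linarith)
    rw [Nat.sub_add_cancel (by omega)] at hjump
    linarith
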